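/- Let (A_1,…,A_n) be the attractor of a strongly connected GDIFS S = (G(V,E), (S_e)) in ℝ^d where each S_e is a bi-Lipschitz contraction with l_e‖x−y‖ ≤ ‖S_e(x)−S_e(y)‖ ≤ r_e‖x−y‖, l_e, r_e ∈ (0,1). If S satisfies the strong separation condition and the bounded distortion property, then A_i and A_j are bi-Lipschitz equivalent for every pair i, j ∈ V. -/

import Mathlib

open Set Metric Topology Function

/-- Upper Lipschitz constant `Lip⁺(f) = sup_{x ≠ y} d(f x, f y)/d(x,y)`. -/
noncomputable def lipUpper {P : Type*} [PseudoMetricSpace P] (f : P → P) : ℝ :=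
  sSup {c | ∃ x y : P, x ≠ y ∧ c = dist (f x) (f y) / dist x y}

/-- Lower Lipschitz constant `Lip⁻(f) = inf_{x ≠ y} d(f x, f y)/d(x,y)`. -/
noncomputable def lipLower {P : Type*} [PseudoMetricSpace P] (f : P → P) : ℝ :=
  sInf {c | ∃ x y : P, x ≠ y ∧ c = dist (f x) (f y) / dist x y}

/-- `IsPathFrom src tgt i j p` : the list of edges `p` is a directed path from `i` to `j`. -/
def IsPathFrom {n : ℕ} {E : Type*} (src tgt : E → Fin n) : Fin n → Fin n → List E → Prop
  | i, j, [] => i = j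
  | i, j, e :: p => src e = i ∧ IsPathFrom src tgt (tgt e) j p

/-- The composition `S_{e_1} ∘ ⋯ ∘ S_{e_p}` along a finite path. -/
def pathMap {E P : Type*} (S : E → P → P) : List E → P → P
  | [] => id
  | e :: p => S e ∘ pathMap S p


/-! Inside `A i` choose two disjoint cylinders: a copy `g '' A i` of `A i` along a loop `g` at `i`,
and a copy `Q` of `A j`. The strong separation condition makes cylinders relatively clopen, so
they are at positive distance from the rest of `A i`; bounded distortion makes all iterates of
`g` quasi-similarities with one distortion constant. Then the Hilbert-hotel map, which fixes
`⋃ₘ gᵐ(Q)` and applies `g` elsewhere, is a bi-Lipschitz bijection `A i → g(A i) ∪ Q`. Doing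
the same at `j` writes `A j` as a union of a copy of `A j` and a copy of `A i`, and two such
separated unions are bi-Lipschitz equivalent piece by piece. -/

section BiLipschitz

variable {α β γ : Type*} [MetricSpace α] [MetricSpace β] [MetricSpace γ]

theorem exists_pos_le_dist_of_disjoint {s t : Set α} (hs : IsCompact s) (ht : IsClosed t)
    (hst : Disjoint s t) : ∃ δ > 0, ∀ x ∈ s, ∀ y ∈ t, δ ≤ dist x y := by
  obtain ⟨r, hr, h⟩ := exists_pos_forall_lt_edist hs ht hst
  refine ⟨r, hr, fun x hx y hy => le_of_lt ?_⟩
  simpa [edist_dist, ← ENNReal.ofReal_coe_nnreal, ENNReal.ofReal_lt_ofReal_iff_of_nonneg]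
    using h x hx y hy

theorem Bornology.IsBounded.exists_pos_dist_le {s : Set α} (hs : Bornology.IsBounded s) :
    ∃ D > 0, ∀ x ∈ s, ∀ y ∈ s, dist x y ≤ D := by
  obtain ⟨D, hD⟩ := isBounded_iff.1 hs
  exact ⟨max D 1, by positivity, fun x hx y hy => (hD hx hy).trans (le_max_left _ _)⟩

theorem le_mul_and_le_mul_of_bounds {s t a b a' b' : ℝ} (ha : 0 < a) (ha' : 0 < a')
    (hs : a ≤ s ∧ s ≤ b) (ht : a' ≤ t ∧ t ≤ b') : a' / b * s ≤ t ∧ t ≤ b' / a * s := by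
  have hb : 0 < b := ha.trans_le (hs.1.trans hs.2)
  constructor
  · calc a' / b * s ≤ a' / b * b := by gcongr; exact hs.2
      _ = a' := div_mul_cancel₀ a' hb.ne'
      _ ≤ t := ht.1
  · calc t ≤ b' := ht.2
      _ = b' / a * a := (div_mul_cancel₀ b' ha.ne').symm
      _ ≤ b' / a * s :=
        mul_le_mul_of_nonneg_left hs.1 (div_nonneg (ha'.le.trans (ht.1.trans ht.2)) ha.le)

def BiLipschitzOnWith (c C : ℝ) (f : α → β) (s : Set α) : Prop :=
  ∀ x ∈ s, ∀ y ∈ s, c * dist x y ≤ dist (f x) (f y) ∧ dist (f x) (f y) ≤ C * dist x y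

namespace BiLipschitzOnWith

variable {c C c' C' : ℝ} {f : α → β} {s t : Set α}

theorem mono (h : BiLipschitzOnWith c C f s) (hts : t ⊆ s) : BiLipschitzOnWith c C f t :=
  fun x hx y hy => h x (hts hx) y (hts hy)

theorem weaken (h : BiLipschitzOnWith c C f s) (hc : c' ≤ c) (hC : C ≤ C') :
    BiLipschitzOnWith c' C' f s := fun x hx y hy =>
  ⟨(mul_le_mul_of_nonneg_right hc dist_nonneg).trans (h x hx y hy).1,
    (h x hx y hy).2.trans (mul_le_mul_of_nonneg_right hC dist_nonneg)⟩

theorem comp {g : β → γ} {u : Set β} (hg : BiLipschitzOnWith c' C' g u)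
    (hf : BiLipschitzOnWith c C f s) (hfs : MapsTo f s u) (hc' : 0 ≤ c') (hC' : 0 ≤ C') :
    BiLipschitzOnWith (c' * c) (C' * C) (g ∘ f) s := by
  intro x hx y hy
  have hfxy := hf x hx y hy
  have hgxy := hg (f x) (hfs hx) (f y) (hfs hy)
  constructor
  · calc c' * c * dist x y = c' * (c * dist x y) := mul_assoc _ _ _
      _ ≤ c' * dist (f x) (f y) := mul_le_mul_of_nonneg_left hfxy.1 hc'
      _ ≤ dist (g (f x)) (g (f y)) := hgxy.1
  · calc dist (g (f x)) (g (f y)) ≤ C' * dist (f x) (f y) := hgxy.2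
      _ ≤ C' * (C * dist x y) := mul_le_mul_of_nonneg_left hfxy.2 hC'
      _ = C' * C * dist x y := (mul_assoc _ _ _).symm

theorem continuousOn (h : BiLipschitzOnWith c C f s) : ContinuousOn f s :=
  (LipschitzOnWith.of_dist_le' fun x hx y hy => (h x hx y hy).2).continuousOn

theorem injOn (h : BiLipschitzOnWith c C f s) (hc : 0 < c) : InjOn f s := by
  intro x hx y hy hxy
  have := (h x hx y hy).1
  rw [hxy, dist_self] at this
  exact dist_le_zero.1 (nonpos_of_mul_nonpos_right this hc)

theorem piecewise {f₁ f₂ : α → β} {c₁ C₁ c₂ C₂ c₃ C₃ : ℝ} {X : Set α}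
    [∀ x, Decidable (x ∈ s)]
    (h₁ : BiLipschitzOnWith c₁ C₁ f₁ (X ∩ s)) (h₂ : BiLipschitzOnWith c₂ C₂ f₂ (X \ s))
    (h₁₂ : ∀ x ∈ X ∩ s, ∀ y ∈ X \ s,
      c₃ * dist x y ≤ dist (f₁ x) (f₂ y) ∧ dist (f₁ x) (f₂ y) ≤ C₃ * dist x y) :
    BiLipschitzOnWith (min c₁ (min c₂ c₃)) (max C₁ (max C₂ C₃)) (s.piecewise f₁ f₂) X := by
  have hc₁ : min c₁ (min c₂ c₃) ≤ c₁ := min_le_left _ _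
  have hc₂ : min c₁ (min c₂ c₃) ≤ c₂ := (min_le_right _ _).trans (min_le_left _ _)
  have hc₃ : min c₁ (min c₂ c₃) ≤ c₃ := (min_le_right _ _).trans (min_le_right _ _)
  have hC₁ : C₁ ≤ max C₁ (max C₂ C₃) := le_max_left _ _
  have hC₂ : C₂ ≤ max C₁ (max C₂ C₃) := (le_max_left _ _).trans (le_max_right _ _)
  have hC₃ : C₃ ≤ max C₁ (max C₂ C₃) := (le_max_right _ _).trans (le_max_right _ _)
  have h₃ : ∀ x ∈ X ∩ s, ∀ y ∈ X \ s, min c₁ (min c₂ c₃) * dist x y ≤ dist (f₁ x) (f₂ y) ∧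
      dist (f₁ x) (f₂ y) ≤ max C₁ (max C₂ C₃) * dist x y := fun x hx y hy =>
    ⟨(mul_le_mul_of_nonneg_right hc₃ dist_nonneg).trans (h₁₂ x hx y hy).1,
      (h₁₂ x hx y hy).2.trans (mul_le_mul_of_nonneg_right hC₃ dist_nonneg)⟩
  intro x hx y hy
  by_cases hxs : x ∈ s <;> by_cases hys : y ∈ s
  · simp only [piecewise_eq_of_mem _ _ _ hxs, piecewise_eq_of_mem _ _ _ hys]
    exact (h₁.weaken hc₁ hC₁) x ⟨hx, hxs⟩ y ⟨hy, hys⟩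
  · simp only [piecewise_eq_of_mem _ _ _ hxs, piecewise_eq_of_notMem _ _ _ hys]
    exact h₃ x ⟨hx, hxs⟩ y ⟨hy, hys⟩
  · simp only [piecewise_eq_of_notMem _ _ _ hxs, piecewise_eq_of_mem _ _ _ hys,
      dist_comm x y, dist_comm (f₂ x)]
    exact h₃ y ⟨hy, hys⟩ x ⟨hx, hxs⟩
  · simp only [piecewise_eq_of_notMem _ _ _ hxs, piecewise_eq_of_notMem _ _ _ hys]
    exact (h₂.weaken hc₂ hC₂) x ⟨hx, hxs⟩ y ⟨hy, hys⟩

end BiLipschitzOnWith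

end BiLipschitz

section BiLipEquivalent

variable {α β γ : Type*} [MetricSpace α] [MetricSpace β] [MetricSpace γ]

def BiLipEquivalent (s : Set α) (t : Set β) : Prop :=
  ∃ f : α → β, BijOn f s t ∧ ∃ c C : ℝ, 0 < c ∧ c ≤ C ∧ BiLipschitzOnWith c C f s

theorem BiLipschitzOnWith.biLipEquivalent_image {c C : ℝ} {f : α → β} {s : Set α}
    (h : BiLipschitzOnWith c C f s) (hc : 0 < c) : BiLipEquivalent s (f '' s) :=
  ⟨f, (h.injOn hc).bijOn_image, c, max c C, hc, le_max_left _ _,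
    h.weaken le_rfl (le_max_right _ _)⟩

namespace BiLipEquivalent

variable {s : Set α} {t : Set β} {u : Set γ}

theorem of_subsingleton (hs : s.Nonempty) (hs' : s.Subsingleton) (ht : t.Nonempty)
    (ht' : t.Subsingleton) : BiLipEquivalent s t := by
  obtain ⟨x, hx⟩ := hs
  obtain ⟨y, hy⟩ := ht
  refine ⟨fun _ => y, ⟨fun _ _ => hy, fun a ha b hb _ => hs' ha hb,
    fun z hz => ⟨x, hx, ht' hy hz⟩⟩, 1, 1, one_pos, le_rfl, fun a ha b hb => ?_⟩
  simp [hs' ha hb]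

theorem symm [Nonempty α] (h : BiLipEquivalent s t) : BiLipEquivalent t s := by
  obtain ⟨f, hf, c, C, hc, hcC, hfc⟩ := h
  have hC : 0 < C := hc.trans_le hcC
  refine ⟨invFunOn f s, hf.symm hf.invOn_invFunOn.symm, C⁻¹, c⁻¹, inv_pos.2 hC,
    inv_anti₀ hc hcC, fun y hy y' hy' => ?_⟩
  have hx := hf.surjOn.mapsTo_invFunOn hy
  have hx' := hf.surjOn.mapsTo_invFunOn hy'
  have hbounds := hfc _ hx _ hx'
  rw [hf.invOn_invFunOn.2 hy, hf.invOn_invFunOn.2 hy'] at hbounds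
  exact ⟨(inv_mul_le_iff₀ hC).2 hbounds.2, (le_inv_mul_iff₀ hc).2 hbounds.1⟩

theorem trans (h₁ : BiLipEquivalent s t) (h₂ : BiLipEquivalent t u) : BiLipEquivalent s u := by
  obtain ⟨f, hf, c, C, hc, hcC, hfc⟩ := h₁
  obtain ⟨g, hg, c', C', hc', hcC', hgc⟩ := h₂
  exact ⟨g ∘ f, hg.comp hf, c' * c, C' * C, mul_pos hc' hc, mul_le_mul hcC' hcC hc.le
    (hc'.le.trans hcC'), hgc.comp hfc hf.mapsTo hc'.le (hc'.le.trans hcC')⟩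

/-- Across the two pieces both distances are pinched between a gap and a diameter. -/
theorem union {s₁ s₂ : Set α} {t₁ t₂ : Set β} (hs₁ : IsCompact s₁) (hs₂ : IsCompact s₂)
    (ht₁ : IsCompact t₁) (ht₂ : IsCompact t₂) (hs : Disjoint s₁ s₂) (ht : Disjoint t₁ t₂)
    (h₁ : BiLipEquivalent s₁ t₁) (h₂ : BiLipEquivalent s₂ t₂) :
    BiLipEquivalent (s₁ ∪ s₂) (t₁ ∪ t₂) := by
  classical
  obtain ⟨f₁, hf₁, c₁, C₁, hc₁, hcC₁, hfc₁⟩ := h₁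
  obtain ⟨f₂, hf₂, c₂, C₂, hc₂, hcC₂, hfc₂⟩ := h₂
  obtain ⟨δ, hδ, hδs⟩ := exists_pos_le_dist_of_disjoint hs₁ hs₂.isClosed hs
  obtain ⟨δ', hδ', hδt⟩ := exists_pos_le_dist_of_disjoint ht₁ ht₂.isClosed ht
  obtain ⟨D, hD, hDs⟩ := (hs₁.union hs₂).isBounded.exists_pos_dist_le
  obtain ⟨D', -, hD't⟩ := (ht₁.union ht₂).isBounded.exists_pos_dist_le
  have hs₁' : (s₁ ∪ s₂) ∩ s₁ ⊆ s₁ := inter_subset_right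
  have hs₂' : (s₁ ∪ s₂) \ s₁ ⊆ s₂ := fun y hy => hy.1.resolve_left hy.2
  have hbij : BijOn (s₁.piecewise f₁ f₂) (s₁ ∪ s₂) (t₁ ∪ t₂) := by
    have hf₁' := hf₁.congr (piecewise_eqOn s₁ f₁ f₂).symm
    have hf₂' := hf₂.congr ((piecewise_eqOn_compl s₁ f₁ f₂).mono hs.subset_compl_left).symm
    refine hf₁'.union hf₂' ((injOn_union hs).2 ⟨hf₁'.injOn, hf₂'.injOn, ?_⟩)
    exact fun x hx y hy => ht.ne_of_mem (hf₁'.mapsTo hx) (hf₂'.mapsTo hy)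
  have hcross : ∀ x ∈ (s₁ ∪ s₂) ∩ s₁, ∀ y ∈ (s₁ ∪ s₂) \ s₁,
      δ' / D * dist x y ≤ dist (f₁ x) (f₂ y) ∧ dist (f₁ x) (f₂ y) ≤ D' / δ * dist x y := by
    intro x hx y hy
    have hfx := hf₁.mapsTo (hs₁' hx)
    have hfy := hf₂.mapsTo (hs₂' hy)
    exact le_mul_and_le_mul_of_bounds hδ hδ' ⟨hδs x (hs₁' hx) y (hs₂' hy), hDs x hx.1 y hy.1⟩
      ⟨hδt _ hfx _ hfy, hD't _ (.inl hfx) _ (.inr hfy)⟩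
  exact ⟨_, hbij, _, _, lt_min hc₁ (lt_min hc₂ (div_pos hδ' hD)),
    (min_le_left _ _).trans (hcC₁.trans (le_max_left _ _)),
    BiLipschitzOnWith.piecewise (hfc₁.mono hs₁') (hfc₂.mono hs₂') hcross⟩

theorem exists_bijective_restrict (h : BiLipEquivalent s t) :
    ∃ Φ : s → t, Bijective Φ ∧ ∃ c C : ℝ, 0 < c ∧ c ≤ C ∧
      ∀ x x' : s, c * dist x x' ≤ dist (Φ x) (Φ x') ∧ dist (Φ x) (Φ x') ≤ C * dist x x' := by
  obtain ⟨f, hf, c, C, hc, hcC, hfc⟩ := h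
  exact ⟨hf.mapsTo.restrict, hf.bijective, c, C, hc, hcC, fun x x' => hfc x x.2 x' x'.2⟩

end BiLipEquivalent

end BiLipEquivalent

section Absorption

variable {α : Type*}

def forwardOrbit (g : α → α) (Q : Set α) : Set α := ⋃ m : ℕ, g^[m] '' Q

variable {g : α → α} {X Q : Set α}

theorem mem_forwardOrbit {x : α} : x ∈ forwardOrbit g Q ↔ ∃ m : ℕ, ∃ q ∈ Q, g^[m] q = x := by
  simp [forwardOrbit]

theorem subset_forwardOrbit : Q ⊆ forwardOrbit g Q :=
  fun q hq => mem_forwardOrbit.2 ⟨0, q, hq, rfl⟩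

theorem mapsTo_forwardOrbit : MapsTo g (forwardOrbit g Q) (forwardOrbit g Q) := by
  intro x hx
  obtain ⟨m, q, hq, rfl⟩ := mem_forwardOrbit.1 hx
  exact mem_forwardOrbit.2 ⟨m + 1, q, hq, iterate_succ_apply' g m q⟩

theorem forwardOrbit_subset_image_union (hgX : MapsTo g X X) (hQX : Q ⊆ X) :
    forwardOrbit g Q ⊆ g '' X ∪ Q := by
  intro x hx
  obtain ⟨m, q, hq, rfl⟩ := mem_forwardOrbit.1 hx
  cases m with
  | zero => exact .inr hq
  | succ m => exact .inl ⟨g^[m] q, hgX.iterate m (hQX hq), (iterate_succ_apply' g m q).symm⟩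

/-- Hilbert's hotel: fixing the forward orbit of `Q` and pushing the rest of `X` one step along
`g` makes room for `Q` next to `g '' X`. -/
theorem bijOn_piecewise_forwardOrbit [∀ x, Decidable (x ∈ forwardOrbit g Q)]
    (hgX : MapsTo g X X) (hg : InjOn g X) (hQX : Q ⊆ X) (hgQ : Disjoint (g '' X) Q) :
    BijOn ((forwardOrbit g Q).piecewise id g) X (g '' X ∪ Q) := by
  have hpre : ∀ y ∈ X, g y ∈ forwardOrbit g Q → y ∈ forwardOrbit g Q := by
    intro y hy hgy
    obtain ⟨m, q, hq, hmq⟩ := mem_forwardOrbit.1 hgy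
    cases m with
    | zero => exact (hgQ.ne_of_mem (mem_image_of_mem g hy) hq hmq.symm).elim
    | succ m =>
      rw [iterate_succ_apply'] at hmq
      exact hg (hgX.iterate m (hQX hq)) hy hmq ▸ mem_forwardOrbit.2 ⟨m, q, hq, rfl⟩
  refine ⟨fun x hx => ?_, fun x hx y hy hxy => ?_, fun z hz => ?_⟩
  · by_cases hxW : x ∈ forwardOrbit g Q
    · rw [piecewise_eq_of_mem _ _ _ hxW]
      exact forwardOrbit_subset_image_union hgX hQX hxW
    · rw [piecewise_eq_of_notMem _ _ _ hxW]
      exact .inl (mem_image_of_mem g hx)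
  · by_cases hxW : x ∈ forwardOrbit g Q <;> by_cases hyW : y ∈ forwardOrbit g Q <;>
      simp only [piecewise_eq_of_mem, piecewise_eq_of_notMem, hxW, hyW, not_false_eq_true,
        id] at hxy
    · exact hxy
    · exact (hyW (hpre y hy (hxy ▸ hxW))).elim
    · exact (hxW (hpre x hx (hxy ▸ hyW))).elim
    · exact hg hx hy hxy
  · rcases hz with ⟨w, hw, rfl⟩ | hz
    · by_cases hwW : w ∈ forwardOrbit g Q
      · exact ⟨g w, hgX hw, piecewise_eq_of_mem _ _ _ (mapsTo_forwardOrbit hwW)⟩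
      · exact ⟨w, hw, piecewise_eq_of_notMem _ _ _ hwW⟩
    · exact ⟨z, hQX hz, piecewise_eq_of_mem _ _ _ (subset_forwardOrbit hz)⟩

theorem exists_lt_iterate_eq_of_notMem_image_iterate {y : α} (hy : y ∈ X) :
    ∀ {m : ℕ}, y ∉ g^[m] '' X → ∃ s < m, ∃ b ∈ X \ g '' X, g^[s] b = y
  | 0, hm => (hm ⟨y, hy, rfl⟩).elim
  | m + 1, hm => by
    by_cases hym : y ∈ g^[m] '' X
    · obtain ⟨b, hb, rfl⟩ := hym
      refine ⟨m, m.lt_succ_self, b, ⟨hb, fun hbg => hm ?_⟩, rfl⟩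
      obtain ⟨a, ha, rfl⟩ := hbg
      exact ⟨a, ha, iterate_succ_apply g m a⟩
    · obtain ⟨s, hs, b, hb, rfl⟩ := exists_lt_iterate_eq_of_notMem_image_iterate hy hym
      exact ⟨s, hs.trans m.lt_succ_self, b, hb, rfl⟩

end Absorption

section QuasiSimilarAbsorption

variable {α β : Type*} [MetricSpace α] [MetricSpace β]

/-- The constants do not depend on `ρ`. -/
theorem BiLipschitzOnWith.comparable {f : α → β} {s : Set α} {ρ K δ B : ℝ}
    (hf : BiLipschitzOnWith ρ (K * ρ) f s) (hρ : 0 < ρ) (hK : 0 ≤ K) (hδ : 0 < δ)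
    {a b b' : α} (ha : a ∈ s) (hb : b ∈ s) (hb' : b' ∈ s)
    (hab : δ ≤ dist a b ∧ dist a b ≤ B) (hab' : δ ≤ dist a b' ∧ dist a b' ≤ B) :
    δ / (K * B) * dist (f a) (f b) ≤ dist (f a) (f b') ∧
      dist (f a) (f b') ≤ K * B / δ * dist (f a) (f b) := by
  have pinch : ∀ c ∈ s, δ ≤ dist a c ∧ dist a c ≤ B →
      ρ * δ ≤ dist (f a) (f c) ∧ dist (f a) (f c) ≤ K * ρ * B := fun c hc hac =>
    ⟨(mul_le_mul_of_nonneg_left hac.1 hρ.le).trans (hf a ha c hc).1,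
      (hf a ha c hc).2.trans (mul_le_mul_of_nonneg_left hac.2 (by positivity))⟩
  have h := le_mul_and_le_mul_of_bounds (mul_pos hρ hδ) (mul_pos hρ hδ) (pinch b hb hab)
    (pinch b' hb' hab')
  rwa [mul_right_comm K ρ B, mul_comm (K * B) ρ, mul_div_mul_left _ _ hρ.ne',
    mul_div_mul_left _ _ hρ.ne'] at h

variable {g : α → α} {X Q : Set α}

/-- Write `x = g^[m] q`. If `y ∈ g^[m] '' X`, pull both points back by `g^[m]`; otherwise pull
them back by `g^[s]`, where `s < m` is the last `s` with `y ∈ g^[s] '' X`. -/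
theorem exists_separated_of_mem_forwardOrbit_of_notMem {ρ δ : ℝ} (hρ : 0 ≤ ρ)
    (hgX : MapsTo g X X) (hQX : Q ⊆ X) (hgQ : Disjoint (g '' X) Q)
    (hg : ∀ x ∈ X, ∀ y ∈ X, ρ * dist x y ≤ dist (g x) (g y))
    (hδg : ∀ a ∈ g '' X, ∀ b ∈ X \ g '' X, δ ≤ dist a b)
    (hδQ : ∀ a ∈ Q, ∀ b ∈ X \ Q, δ ≤ dist a b)
    {x y : α} (hx : x ∈ forwardOrbit g Q) (hy : y ∈ X) (hyW : y ∉ forwardOrbit g Q) :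
    ∃ t : ℕ, ∃ a ∈ X, ∃ b ∈ X, g^[t] a = x ∧ g^[t] b = y ∧
      min δ (ρ * δ) ≤ dist a b ∧ min δ (ρ * δ) ≤ dist a (g b) := by
  obtain ⟨m, q, hq, rfl⟩ := mem_forwardOrbit.1 hx
  by_cases hym : y ∈ g^[m] '' X
  · obtain ⟨w, hw, rfl⟩ := hym
    have hwQ : w ∉ Q := fun h => hyW (mem_forwardOrbit.2 ⟨m, w, h, rfl⟩)
    have hgwQ : g w ∉ Q := hgQ.notMem_of_mem_left (mem_image_of_mem g hw)
    exact ⟨m, q, hQX hq, w, hw, rfl, rfl, (min_le_left _ _).trans (hδQ q hq w ⟨hw, hwQ⟩),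
      (min_le_left _ _).trans (hδQ q hq (g w) ⟨hgX hw, hgwQ⟩)⟩
  obtain ⟨s, hsm, b, ⟨hb, hbg⟩, rfl⟩ := exists_lt_iterate_eq_of_notMem_image_iterate hy hym
  have hbW : b ∉ forwardOrbit g Q := fun h => hyW (mapsTo_forwardOrbit.iterate s h)
  set v := g^[m - s - 1] q
  have hvW : v ∈ forwardOrbit g Q := mem_forwardOrbit.2 ⟨_, q, hq, rfl⟩
  have hv : v ∈ X := hgX.iterate _ (hQX hq)
  have hvb : δ ≤ dist v b := by
    rcases forwardOrbit_subset_image_union hgX hQX hvW with hvg | hvQ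
    · exact hδg v hvg b ⟨hb, hbg⟩
    · exact hδQ v hvQ b ⟨hb, fun hbQ => hbW (subset_forwardOrbit hbQ)⟩
  refine ⟨s, g v, hgX hv, b, hb, ?_, rfl, (min_le_left _ _).trans
    (hδg _ (mem_image_of_mem g hv) b ⟨hb, hbg⟩), (min_le_right _ _).trans
    ((mul_le_mul_of_nonneg_left hvb hρ).trans (hg v hv b hb))⟩
  rw [← iterate_succ_apply g, ← iterate_add_apply]
  congr 1
  omega

theorem biLipEquivalent_image_union {K : ℝ} (hK : 0 < K) (hX : IsCompact X)
    (hgX : MapsTo g X X) (hQX : Q ⊆ X) (hQ : IsCompact Q) (hgQ : Disjoint (g '' X) Q)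
    (hXg : IsClosed (X \ g '' X)) (hXQ : IsClosed (X \ Q))
    (hiter : ∀ m : ℕ, ∃ ρ > 0, BiLipschitzOnWith ρ (K * ρ) g^[m] X) :
    BiLipEquivalent X (g '' X ∪ Q) := by
  classical
  obtain ⟨ρ, hρ, hg⟩ := hiter 1
  rw [iterate_one] at hg
  obtain ⟨δ₁, hδ₁, hgap₁⟩ := exists_pos_le_dist_of_disjoint
    (hX.image_of_continuousOn hg.continuousOn) hXg disjoint_sdiff_right
  obtain ⟨δ₂, hδ₂, hgap₂⟩ := exists_pos_le_dist_of_disjoint hQ hXQ disjoint_sdiff_right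
  obtain ⟨B, hB, hBX⟩ := hX.isBounded.exists_pos_dist_le
  set δ := min (min δ₁ δ₂) (ρ * min δ₁ δ₂)
  have hδ : 0 < δ := by positivity
  have hcross : ∀ x ∈ X ∩ forwardOrbit g Q, ∀ y ∈ X \ forwardOrbit g Q,
      δ / (K * B) * dist x y ≤ dist (id x) (g y) ∧ dist (id x) (g y) ≤ K * B / δ * dist x y := by
    rintro x ⟨-, hxW⟩ y ⟨hy, hyW⟩
    obtain ⟨t, a, ha, b, hb, rfl, rfl, hab, hagb⟩ := exists_separated_of_mem_forwardOrbit_of_notMem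
      hρ.le hgX hQX hgQ (fun x hx y hy => (hg x hx y hy).1)
      (fun a ha b hb => (min_le_left _ _).trans (hgap₁ a ha b hb))
      (fun a ha b hb => (min_le_right _ _).trans (hgap₂ a ha b hb)) hxW hy hyW
    obtain ⟨ρ', hρ', ht⟩ := hiter t
    rw [id, ← iterate_succ_apply' g, iterate_succ_apply]
    exact ht.comparable hρ' hK.le hδ ha hb (hgX hb) ⟨hab, hBX a ha b hb⟩
      ⟨hagb, hBX a ha _ (hgX hb)⟩
  have hid : BiLipschitzOnWith 1 1 (id : α → α) (X ∩ forwardOrbit g Q) :=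
    fun x _ y _ => by simp
  exact ⟨_, bijOn_piecewise_forwardOrbit hgX (hg.injOn hρ) hQX hgQ, _, _,
    lt_min one_pos (lt_min hρ (by positivity)), (min_le_left _ _).trans (le_max_left _ _),
    hid.piecewise (hg.mono sdiff_subset) hcross⟩

end QuasiSimilarAbsorption

section LipConstants

variable {P : Type*} [MetricSpace P] {f : P → P}

theorem lipLower_mul_dist_le (x y : P) : lipLower f * dist x y ≤ dist (f x) (f y) := by
  rcases eq_or_ne x y with rfl | hxy
  · simp
  have hbdd : BddBelow {c | ∃ x y : P, x ≠ y ∧ c = dist (f x) (f y) / dist x y} :=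
    ⟨0, by rintro _ ⟨x, y, -, rfl⟩; positivity⟩
  exact (le_div_iff₀ (dist_pos.2 hxy)).1 (csInf_le hbdd ⟨x, y, hxy, rfl⟩)

theorem dist_le_lipUpper_mul {C : ℝ} (hf : ∀ x y, dist (f x) (f y) ≤ C * dist x y) (x y : P) :
    dist (f x) (f y) ≤ lipUpper f * dist x y := by
  rcases eq_or_ne x y with rfl | hxy
  · simp
  have hbdd : BddAbove {c | ∃ x y : P, x ≠ y ∧ c = dist (f x) (f y) / dist x y} :=
    ⟨C, by rintro _ ⟨x, y, hxy, rfl⟩; exact (div_le_iff₀ (dist_pos.2 hxy)).2 (hf x y)⟩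
  exact (div_le_iff₀ (dist_pos.2 hxy)).1 (le_csSup hbdd ⟨x, y, hxy, rfl⟩)

theorem le_lipLower [Nontrivial P] {c : ℝ} (hf : ∀ x y, c * dist x y ≤ dist (f x) (f y)) :
    c ≤ lipLower f := by
  obtain ⟨x, y, hxy⟩ := exists_pair_ne P
  refine le_csInf ⟨_, x, y, hxy, rfl⟩ ?_
  rintro _ ⟨x, y, hxy, rfl⟩
  exact (le_div_iff₀ (dist_pos.2 hxy)).2 (hf x y)

theorem biLipschitzOnWith_lipLower {C K : ℝ} (hf : ∀ x y, dist (f x) (f y) ≤ C * dist x y)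
    (hK : lipUpper f ≤ K * lipLower f) :
    BiLipschitzOnWith (lipLower f) (K * lipLower f) f univ := fun x _ y _ =>
  ⟨lipLower_mul_dist_le x y,
    (dist_le_lipUpper_mul hf x y).trans (mul_le_mul_of_nonneg_right hK dist_nonneg)⟩

end LipConstants

theorem exists_forall_lipschitzWith_lt_one {ι α β : Type*} [Finite ι] [PseudoMetricSpace α]
    [PseudoMetricSpace β] {f : ι → α → β} {r : ι → ℝ}
    (hf : ∀ i x y, dist (f i x) (f i y) ≤ r i * dist x y) (hr : ∀ i, r i < 1) :
    ∃ ρ : NNReal, ρ < 1 ∧ ∀ i, LipschitzWith ρ (f i) := by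
  cases nonempty_fintype ι
  exact ⟨Finset.univ.sup fun i => (r i).toNNReal,
    (Finset.sup_lt_iff one_pos).2 fun i _ => Real.toNNReal_lt_one.2 (hr i),
    fun i => (LipschitzWith.of_dist_le' (hf i)).weaken
      (Finset.le_sup (f := fun i => (r i).toNNReal) (Finset.mem_univ i))⟩

section Paths

variable {n : ℕ} {E P : Type*} {src tgt : E → Fin n}

theorem IsPathFrom.append {i j k : Fin n} {p q : List E} (hp : IsPathFrom src tgt i j p)
    (hq : IsPathFrom src tgt j k q) : IsPathFrom src tgt i k (p ++ q) := by
  induction p generalizing i with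
  | nil => exact (hp : i = j) ▸ hq
  | cons e p ih => exact ⟨hp.1, ih hp.2⟩

theorem IsPathFrom.target_unique {i j j' : Fin n} {p : List E} (h : IsPathFrom src tgt i j p)
    (h' : IsPathFrom src tgt i j' p) : j = j' := by
  induction p generalizing i with
  | nil => exact (h : i = j).symm.trans h'
  | cons e p ih => exact ih h.2 h'.2

theorem IsPathFrom.flatten_replicate {i : Fin n} {p : List E} (hp : IsPathFrom src tgt i i p)
    (m : ℕ) : IsPathFrom src tgt i i (List.replicate m p).flatten := by
  induction m with
  | zero => exact rfl
  | succ m ih => exact hp.append ih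

theorem pathMap_append (S : E → P → P) (p q : List E) :
    pathMap S (p ++ q) = pathMap S p ∘ pathMap S q := by
  induction p with
  | nil => rfl
  | cons e p ih => rw [List.cons_append, pathMap, ih, pathMap, comp_assoc]

theorem pathMap_flatten_replicate (S : E → P → P) (p : List E) (m : ℕ) :
    pathMap S (List.replicate m p).flatten = (pathMap S p)^[m] := by
  induction m with
  | zero => rfl
  | succ m ih => rw [List.replicate_succ, List.flatten_cons, pathMap_append, ih, iterate_succ']

theorem continuous_pathMap [TopologicalSpace P] {S : E → P → P} (hS : ∀ e, Continuous (S e))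
    (p : List E) : Continuous (pathMap S p) := by
  induction p with
  | nil => exact continuous_id
  | cons e p ih => exact (hS e).comp ih

theorem injective_pathMap {S : E → P → P} (hS : ∀ e, Injective (S e)) (p : List E) :
    Injective (pathMap S p) := by
  induction p with
  | nil => exact injective_id
  | cons e p ih => exact (hS e).comp ih

theorem lipschitzWith_pathMap [PseudoEMetricSpace P] {S : E → P → P} {ρ : NNReal}
    (hS : ∀ e, LipschitzWith ρ (S e)) (p : List E) :
    LipschitzWith (ρ ^ p.length) (pathMap S p) := by
  induction p with
  | nil => exact LipschitzWith.id
  | cons e p ih => rw [List.length_cons, pow_succ']; exact (hS e).comp ih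

theorem biLipschitzOnWith_pathMap [MetricSpace P] {S : E → P → P} {l r : E → ℝ}
    (hl : ∀ e, 0 ≤ l e) (hr : ∀ e, 0 ≤ r e) (hS : ∀ e, BiLipschitzOnWith (l e) (r e) (S e) univ)
    (p : List E) : BiLipschitzOnWith (p.map l).prod (p.map r).prod (pathMap S p) univ := by
  induction p with
  | nil => exact fun x _ y _ => by simp [pathMap]
  | cons e p ih => exact (hS e).comp ih (mapsTo_univ _ _) (hl e) (hr e)

end Paths

section Attractor

variable {n : ℕ} {E P : Type*} {src tgt : E → Fin n} {S : E → P → P} {A : Fin n → Set P}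

theorem IsPathFrom.mapsTo_pathMap
    (hattr : ∀ i, A i = ⋃ (e : E) (_ : src e = i), S e '' A (tgt e))
    {i j : Fin n} {p : List E} (hp : IsPathFrom src tgt i j p) :
    MapsTo (pathMap S p) (A j) (A i) := by
  induction p generalizing i with
  | nil => exact (hp : i = j) ▸ mapsTo_id _
  | cons e p ih =>
    intro x hx
    rw [hattr i]
    exact mem_iUnion₂.2 ⟨e, hp.1, mem_image_of_mem _ (ih hp.2 hx)⟩

theorem exists_mem_cylinder (hattr : ∀ i, A i = ⋃ (e : E) (_ : src e = i), S e '' A (tgt e))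
    {i : Fin n} {x : P} (hx : x ∈ A i) (m : ℕ) :
    ∃ p : List E, ∃ j, p.length = m ∧ IsPathFrom src tgt i j p ∧ x ∈ pathMap S p '' A j := by
  induction m generalizing i x with
  | zero => exact ⟨[], i, rfl, rfl, x, hx, rfl⟩
  | succ m ih =>
    rw [hattr i] at hx
    obtain ⟨e, hei, y, hy, rfl⟩ := mem_iUnion₂.1 hx
    obtain ⟨p, j, hlen, hp, z, hz, rfl⟩ := ih hy
    exact ⟨e :: p, j, by rw [List.length_cons, hlen], ⟨hei, hp⟩, z, hz, rfl⟩

theorem disjoint_cylinders (hinj : ∀ e, Injective (S e))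
    (hattr : ∀ i, A i = ⋃ (e : E) (_ : src e = i), S e '' A (tgt e))
    (hssc : ∀ e e' : E, src e = src e' → e ≠ e' →
      Disjoint (S e '' A (tgt e)) (S e' '' A (tgt e')))
    {i j j' : Fin n} {p q : List E} (hlen : p.length = q.length) (hne : p ≠ q)
    (hp : IsPathFrom src tgt i j p) (hq : IsPathFrom src tgt i j' q) :
    Disjoint (pathMap S p '' A j) (pathMap S q '' A j') := by
  induction p generalizing i q with
  | nil => exact (hne (List.length_eq_zero_iff.1 hlen.symm).symm).elim
  | cons e p ih =>
    obtain _ | ⟨e', q⟩ := q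
    · exact absurd hlen (List.cons_ne_nil _ _ ∘ List.length_eq_zero_iff.1)
    rw [pathMap, pathMap, image_comp, image_comp]
    by_cases hee : e = e'
    · subst hee
      exact disjoint_image_of_injective (hinj e)
        (ih (Nat.succ.inj hlen) (fun h => hne (h ▸ rfl)) hp.2 hq.2)
    · exact (hssc e e' (hp.1.trans hq.1.symm) hee).mono
        (image_mono (hp.2.mapsTo_pathMap hattr).image_subset)
        (image_mono (hq.2.mapsTo_pathMap hattr).image_subset)

theorem Set.Nontrivial.of_isPathFrom (hinj : ∀ e, Injective (S e))
    (hattr : ∀ i, A i = ⋃ (e : E) (_ : src e = i), S e '' A (tgt e))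
    {i k : Fin n} {p : List E} (hp : IsPathFrom src tgt i k p) (hk : (A k).Nontrivial) :
    (A i).Nontrivial :=
  (hk.image (injective_pathMap hinj p)).mono (hp.mapsTo_pathMap hattr).image_subset

/-- Cylinders of a fixed depth partition `A i` into finitely many compact pieces, so each of
them is relatively clopen. -/
theorem isClosed_diff_cylinder [Finite E] [TopologicalSpace P] [T2Space P]
    (hcont : ∀ e, Continuous (S e)) (hinj : ∀ e, Injective (S e)) (hAcp : ∀ i, IsCompact (A i))
    (hattr : ∀ i, A i = ⋃ (e : E) (_ : src e = i), S e '' A (tgt e))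
    (hssc : ∀ e e' : E, src e = src e' → e ≠ e' →
      Disjoint (S e '' A (tgt e)) (S e' '' A (tgt e')))
    {i j : Fin n} {p : List E} (hp : IsPathFrom src tgt i j p) :
    IsClosed (A i \ pathMap S p '' A j) := by
  set F := {qk : List E × Fin n |
    qk.1.length = p.length ∧ IsPathFrom src tgt i qk.2 qk.1 ∧ qk.1 ≠ p}
  have hF : F.Finite := ((List.finite_length_eq E p.length).prod finite_univ).subset
    fun qk hqk => ⟨hqk.1, mem_univ _⟩
  have hcyl : A i \ pathMap S p '' A j = ⋃ qk ∈ F, pathMap S qk.1 '' A qk.2 := by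
    ext z
    simp only [mem_sdiff, mem_iUnion₂, exists_prop, Prod.exists]
    constructor
    · rintro ⟨hz, hzp⟩
      obtain ⟨q, k, hlen, hq, hzq⟩ := exists_mem_cylinder hattr hz p.length
      refine ⟨q, k, ⟨hlen, hq, ?_⟩, hzq⟩
      rintro rfl
      exact hzp (hq.target_unique hp ▸ hzq)
    · rintro ⟨q, k, ⟨hlen, hq, hne⟩, hzq⟩
      exact ⟨(hq.mapsTo_pathMap hattr).image_subset hzq,
        (disjoint_cylinders hinj hattr hssc hlen hne hq hp).notMem_of_mem_left hzq⟩
  rw [hcyl]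
  exact hF.isClosed_biUnion fun qk _ =>
    ((hAcp qk.2).image (continuous_pathMap hcont qk.1)).isClosed

/-- Cylinder diameters shrink geometrically, so two distinct points end up in distinct
cylinders of the same depth. -/
theorem exists_disjoint_cylinders_of_nontrivial [MetricSpace P] {ρ : NNReal}
    (hinj : ∀ e, Injective (S e)) (hS : ∀ e, LipschitzWith ρ (S e)) (hρ : ρ < 1)
    (hAb : ∀ i, Bornology.IsBounded (A i))
    (hattr : ∀ i, A i = ⋃ (e : E) (_ : src e = i), S e '' A (tgt e))
    (hssc : ∀ e e' : E, src e = src e' → e ≠ e' →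
      Disjoint (S e '' A (tgt e)) (S e' '' A (tgt e')))
    {i : Fin n} (hi : (A i).Nontrivial) :
    ∃ p q : List E, ∃ j j', IsPathFrom src tgt i j p ∧ IsPathFrom src tgt i j' q ∧
      Disjoint (pathMap S p '' A j) (pathMap S q '' A j') := by
  obtain ⟨x, hx, y, hy, hxy⟩ := hi
  obtain ⟨B, hB, hBA⟩ := (Bornology.isBounded_iUnion.2 hAb).exists_pos_dist_le
  obtain ⟨m, hm⟩ := exists_pow_lt_of_lt_one (div_pos (dist_pos.2 hxy) hB)
    (NNReal.coe_lt_one.2 hρ)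
  obtain ⟨p, j, hpm, hp, u, hu, rfl⟩ := exists_mem_cylinder hattr hx m
  obtain ⟨q, j', hqm, hq, v, hv, rfl⟩ := exists_mem_cylinder hattr hy m
  refine ⟨p, q, j, j', hp, hq, disjoint_cylinders hinj hattr hssc (hpm.trans hqm.symm) ?_ hp hq⟩
  rintro rfl
  obtain rfl := hp.target_unique hq
  have huv := hBA u (mem_iUnion.2 ⟨j, hu⟩) v (mem_iUnion.2 ⟨j, hv⟩)
  have hlip := (lipschitzWith_pathMap hS p).dist_le_mul u v
  rw [hpm, NNReal.coe_pow] at hlip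
  rw [lt_div_iff₀ hB] at hm
  exact (hlip.trans (mul_le_mul_of_nonneg_left huv (by positivity))).not_gt hm

theorem exists_disjoint_cylinders [MetricSpace P] {ρ : NNReal}
    (hinj : ∀ e, Injective (S e)) (hS : ∀ e, LipschitzWith ρ (S e)) (hρ : ρ < 1)
    (hAb : ∀ i, Bornology.IsBounded (A i))
    (hattr : ∀ i, A i = ⋃ (e : E) (_ : src e = i), S e '' A (tgt e))
    (hssc : ∀ e e' : E, src e = src e' → e ≠ e' →
      Disjoint (S e '' A (tgt e)) (S e' '' A (tgt e')))
    (hsc : ∀ i j : Fin n, ∃ p : List E, p ≠ [] ∧ IsPathFrom src tgt i j p)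
    {i : Fin n} (hi : (A i).Nontrivial) (k k' : Fin n) :
    ∃ a b : List E, a ≠ [] ∧ IsPathFrom src tgt i k a ∧ IsPathFrom src tgt i k' b ∧
      Disjoint (pathMap S a '' A k) (pathMap S b '' A k') := by
  obtain ⟨p, q, j, j', hp, hq, hpq⟩ :=
    exists_disjoint_cylinders_of_nontrivial hinj hS hρ hAb hattr hssc hi
  obtain ⟨w, hw0, hw⟩ := hsc j k
  obtain ⟨w', -, hw'⟩ := hsc j' k'
  refine ⟨p ++ w, q ++ w', by simp [hw0], hp.append hw, hq.append hw', hpq.mono ?_ ?_⟩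
  · rw [pathMap_append, image_comp]
    exact image_mono (hw.mapsTo_pathMap hattr).image_subset
  · rw [pathMap_append, image_comp]
    exact image_mono (hw'.mapsTo_pathMap hattr).image_subset

/-- `(pathMap S a)^[m]` is the map along the path `a` repeated `m` times, to which BDP applies;
`max K 1` also covers `m = 0`. -/
theorem exists_biLipschitzOnWith_iterate_pathMap [MetricSpace P] [Nontrivial P] {l r : E → ℝ}
    (hl : ∀ e, 0 < l e) (hr : ∀ e, 0 ≤ r e) (hS : ∀ e, BiLipschitzOnWith (l e) (r e) (S e) univ)
    {K : ℝ} (hBDP : ∀ w : List E, w ≠ [] → (∃ i j, IsPathFrom src tgt i j w) →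
      lipUpper (pathMap S w) ≤ K * lipLower (pathMap S w))
    {i : Fin n} {a : List E} (ha : IsPathFrom src tgt i i a) (ha0 : a ≠ []) (m : ℕ) :
    ∃ ρ > 0, BiLipschitzOnWith ρ (max K 1 * ρ) (pathMap S a)^[m] univ := by
  rcases Nat.eq_zero_or_pos m with rfl | hm
  · refine ⟨1, one_pos, fun x _ y _ => ?_⟩
    simpa using le_mul_of_one_le_left dist_nonneg (le_max_right K 1)
  set w := (List.replicate m a).flatten
  have hw0 : w ≠ [] := by simp [w, List.flatten_eq_nil_iff, ha0, hm.ne']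
  have hw := biLipschitzOnWith_pathMap (fun e => (hl e).le) hr hS w
  have hρ : 0 < lipLower (pathMap S w) :=
    (List.prod_pos fun _ h => by obtain ⟨e, -, rfl⟩ := List.mem_map.1 h; exact hl e).trans_le
      (le_lipLower fun x y => (hw x trivial y trivial).1)
  rw [← pathMap_flatten_replicate]
  exact ⟨_, hρ, (biLipschitzOnWith_lipLower (fun x y => (hw x trivial y trivial).2)
    (hBDP w hw0 ⟨i, i, ha.flatten_replicate m⟩)).weaken le_rfl
    (mul_le_mul_of_nonneg_right (le_max_left _ _) hρ.le)⟩

theorem biLipEquivalent_cylinder_union [Finite E] [MetricSpace P] [Nontrivial P] {l r : E → ℝ}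
    (hl : ∀ e, 0 < l e) (hr : ∀ e, 0 ≤ r e) (hS : ∀ e, BiLipschitzOnWith (l e) (r e) (S e) univ)
    (hAcp : ∀ i, IsCompact (A i))
    (hattr : ∀ i, A i = ⋃ (e : E) (_ : src e = i), S e '' A (tgt e))
    (hssc : ∀ e e' : E, src e = src e' → e ≠ e' →
      Disjoint (S e '' A (tgt e)) (S e' '' A (tgt e')))
    {K : ℝ} (hBDP : ∀ w : List E, w ≠ [] → (∃ i j, IsPathFrom src tgt i j w) →
      lipUpper (pathMap S w) ≤ K * lipLower (pathMap S w))
    {i j : Fin n} {a b : List E} (ha : IsPathFrom src tgt i i a) (ha0 : a ≠ [])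
    (hb : IsPathFrom src tgt i j b) (hab : Disjoint (pathMap S a '' A i) (pathMap S b '' A j)) :
    BiLipEquivalent (A i) (pathMap S a '' A i ∪ pathMap S b '' A j) := by
  have hinj : ∀ e, Injective (S e) := fun e => injOn_univ.1 ((hS e).injOn (hl e))
  have hcont : ∀ e, Continuous (S e) := fun e => continuousOn_univ.1 (hS e).continuousOn
  refine biLipEquivalent_image_union (K := max K 1) (by positivity) (hAcp i)
    (ha.mapsTo_pathMap hattr) (hb.mapsTo_pathMap hattr).image_subset
    ((hAcp j).image (continuous_pathMap hcont b)) hab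
    (isClosed_diff_cylinder hcont hinj hAcp hattr hssc ha)
    (isClosed_diff_cylinder hcont hinj hAcp hattr hssc hb) fun m => ?_
  obtain ⟨ρ, hρ, h⟩ := exists_biLipschitzOnWith_iterate_pathMap hl hr hS hBDP ha ha0 m
  exact ⟨ρ, hρ, h.mono (subset_univ _)⟩

theorem biLipEquivalent_image_pathMap [MetricSpace P] {l r : E → ℝ} (hl : ∀ e, 0 < l e)
    (hr : ∀ e, 0 ≤ r e) (hS : ∀ e, BiLipschitzOnWith (l e) (r e) (S e) univ) (X : Set P)
    (p : List E) : BiLipEquivalent X (pathMap S p '' X) :=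
  ((biLipschitzOnWith_pathMap (fun e => (hl e).le) hr hS p).mono
    (subset_univ X)).biLipEquivalent_image
    (List.prod_pos fun _ h => by obtain ⟨e, -, rfl⟩ := List.mem_map.1 h; exact hl e)

theorem biLipEquivalent_cylinder_union_cylinder [MetricSpace P] [Nonempty P] {l r : E → ℝ}
    (hl : ∀ e, 0 < l e) (hr : ∀ e, 0 ≤ r e) (hS : ∀ e, BiLipschitzOnWith (l e) (r e) (S e) univ)
    (hAcp : ∀ i, IsCompact (A i)) {i j : Fin n} {a b a' b' : List E}
    (hab : Disjoint (pathMap S a '' A i) (pathMap S b '' A j))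
    (hab' : Disjoint (pathMap S a' '' A j) (pathMap S b' '' A i)) :
    BiLipEquivalent (pathMap S a '' A i ∪ pathMap S b '' A j)
      (pathMap S a' '' A j ∪ pathMap S b' '' A i) := by
  have hcont : ∀ e, Continuous (S e) := fun e => continuousOn_univ.1 (hS e).continuousOn
  have hcpt : ∀ t p, IsCompact (pathMap S p '' A t) := fun t p =>
    (hAcp t).image (continuous_pathMap hcont p)
  have hcopy := biLipEquivalent_image_pathMap hl hr hS
  rw [union_comm (pathMap S a' '' A j)]
  exact .union (hcpt i a) (hcpt j b) (hcpt i b') (hcpt j a') hab hab'.symm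
    ((hcopy _ a).symm.trans (hcopy _ b')) ((hcopy _ b).symm.trans (hcopy _ a'))

end Attractor

theorem attractor_components_biLipschitz_equivalent_general
    (d n : ℕ) (E : Type) [Fintype E] (src tgt : E → Fin n)
    (S : E → EuclideanSpace ℝ (Fin d) → EuclideanSpace ℝ (Fin d))
    -- each `S e` is a bi-Lipschitz contraction
    (l r : E → ℝ) (hl : ∀ e, l e ∈ Set.Ioo (0:ℝ) 1) (hr : ∀ e, r e ∈ Set.Ioo (0:ℝ) 1)
    (hS : ∀ e, ∀ x y, l e * dist x y ≤ dist (S e x) (S e y) ∧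
      dist (S e x) (S e y) ≤ r e * dist x y)
    -- strong connectivity
    (hsc : ∀ i j : Fin n, ∃ p : List E, p ≠ [] ∧ IsPathFrom src tgt i j p)
    -- the attractor
    (A : Fin n → Set (EuclideanSpace ℝ (Fin d)))
    (hAcp : ∀ i, IsCompact (A i)) (hAne : ∀ i, (A i).Nonempty)
    (hattr : ∀ i, A i = ⋃ (e : E) (_ : src e = i), S e '' A (tgt e))
    -- the strong separation condition
    (hssc : ∀ e e' : E, src e = src e' → e ≠ e' →
      Disjoint (S e '' A (tgt e)) (S e' '' A (tgt e')))
    -- the bounded distortion property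
    (K : ℝ)
    (hBDP : ∀ w : List E, w ≠ [] → (∃ i j, IsPathFrom src tgt i j w) →
      lipUpper (pathMap S w) ≤ K * lipLower (pathMap S w)) :
    ∀ i j : Fin n, ∃ Φ : (A i) → (A j), Function.Bijective Φ ∧
      ∃ c C : ℝ, 0 < c ∧ c ≤ C ∧
        ∀ x x' : A i, c * dist x x' ≤ dist (Φ x) (Φ x') ∧
          dist (Φ x) (Φ x') ≤ C * dist x x' := by
  intro i j
  refine BiLipEquivalent.exists_bijective_restrict ?_
  by_cases htriv : ∀ k, (A k).Subsingleton
  · exact .of_subsingleton (hAne i) (htriv i) (hAne j) (htriv j)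
  obtain ⟨k, hk⟩ : ∃ k, (A k).Nontrivial := by
    simpa only [not_forall, not_subsingleton_iff] using htriv
  obtain ⟨x, -, y, -, hxy⟩ := id hk
  have : Nontrivial (EuclideanSpace ℝ (Fin d)) := nontrivial_of_ne x y hxy
  have hS' : ∀ e, BiLipschitzOnWith (l e) (r e) (S e) univ := fun e x _ y _ => hS e x y
  have hl' : ∀ e, 0 < l e := fun e => (hl e).1
  have hr' : ∀ e, 0 ≤ r e := fun e => (hr e).1.le
  have hinj : ∀ e, Injective (S e) := fun e => injOn_univ.1 ((hS' e).injOn (hl' e))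
  obtain ⟨ρ, hρ, hρS⟩ := exists_forall_lipschitzWith_lt_one (fun e => (hS e · · |>.2))
    fun e => (hr e).2
  have hnt : ∀ t, (A t).Nontrivial := fun t => hk.of_isPathFrom hinj hattr (hsc t k).choose_spec.2
  have hcyl := fun t => exists_disjoint_cylinders hinj hρS hρ (fun t => (hAcp t).isBounded) hattr
    hssc hsc (hnt t)
  obtain ⟨a, b, ha0, ha, hb, hab⟩ := hcyl i i j
  obtain ⟨a', b', ha0', ha', hb', hab'⟩ := hcyl j j i
  exact ((biLipEquivalent_cylinder_union hl' hr' hS' hAcp hattr hssc hBDP ha ha0 hb hab).trans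
    (biLipEquivalent_cylinder_union_cylinder hl' hr' hS' hAcp hab hab')).trans
    (biLipEquivalent_cylinder_union hl' hr' hS' hAcp hattr hssc hBDP ha' ha0' hb' hab').symm

theorem attractor_components_biLipschitz_equivalent
    (d n : ℕ) (E : Type) [Fintype E] (src tgt : E → Fin n)
    (S : E → EuclideanSpace ℝ (Fin d) → EuclideanSpace ℝ (Fin d))
    (hout : ∀ i : Fin n, ∃ e : E, src e = i)
    -- each `S e` is a bi-Lipschitz contraction
    (l r : E → ℝ) (hl : ∀ e, l e ∈ Set.Ioo (0:ℝ) 1) (hr : ∀ e, r e ∈ Set.Ioo (0:ℝ) 1)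
    (hS : ∀ e, ∀ x y, l e * dist x y ≤ dist (S e x) (S e y) ∧
      dist (S e x) (S e y) ≤ r e * dist x y)
    -- strong connectivity
    (hsc : ∀ i j : Fin n, ∃ p : List E, p ≠ [] ∧ IsPathFrom src tgt i j p)
    -- the attractor
    (A : Fin n → Set (EuclideanSpace ℝ (Fin d)))
    (hAcp : ∀ i, IsCompact (A i)) (hAne : ∀ i, (A i).Nonempty)
    (hattr : ∀ i, A i = ⋃ (e : E) (_ : src e = i), S e '' A (tgt e))
    -- the strong separation condition
    (hssc : ∀ e e' : E, src e = src e' → e ≠ e' →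
      Disjoint (S e '' A (tgt e)) (S e' '' A (tgt e')))
    -- the bounded distortion property
    (K : ℝ) (hK : 0 < K)
    (hBDP : ∀ w : List E, w ≠ [] → (∃ i j, IsPathFrom src tgt i j w) →
      lipUpper (pathMap S w) ≤ K * lipLower (pathMap S w)) :
    ∀ i j : Fin n, ∃ Φ : (A i) → (A j), Function.Bijective Φ ∧
      ∃ c C : ℝ, 0 < c ∧ c ≤ C ∧
        ∀ x x' : A i, c * dist x x' ≤ dist (Φ x) (Φ x') ∧
          dist (Φ x) (Φ x') ≤ C * dist x x' :=
  attractor_components_biLipschitz_equivalent_general d n E src tgt S l r hl hr hS hsc A hAcp hAne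
    hattr hssc K hBDP
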